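/- (Density) Let L be a bounded lattice, X = D♭(L), and let e : L → C(X) = MPE(X,2) be the embedding a ↦ e_a. Then every element φ of C(X) satisfies φ = ⋁{ ⋀ e(F) : F a filter of L with ⋀ e(F) ≤ φ } and φ = ⋀{ ⋁ e(I) : I an ideal of L with φ ≤ ⋁ e(I) }, where the joins and meets are taken in the complete lattice C(X); in particular every element of C(X) is both a join of meets and a meet of joins of elements of e(L), i.e. the completion (e, C(X)) is dense. -/

import Mathlib

namespace CanExt

open Classical

/-- A partial map from `X` into the two-element chain `{0,1}` (encoded as `Bool`,
with `false` playing the role of `0` and `true` the role of `1`);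
`φ x = none` means `x` is outside the domain of `φ`. -/
abbrev PMap (X : Type*) := X → Option Bool

/-- The preimage of `1` of a partial map. -/
def pre1 {X : Type*} (φ : PMap X) : Set X := {x | φ x = some true}

/-- The preimage of `0` of a partial map. -/
def pre0 {X : Type*} (φ : PMap X) : Set X := {x | φ x = some false}

/-- A partial map is `E`-preserving if whenever `x, y` lie in its domain and
`(x,y) ∈ E`, then `φ x ≤ φ y`. -/
def EPres {X : Type*} (E : X → X → Prop) (φ : PMap X) : Prop :=
  ∀ ⦃x y : X⦄, E x y → ∀ ⦃a b : Bool⦄, φ x = some a → φ y = some b → a ≤ b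

/-- `PExt ψ φ` : the partial map `ψ` extends the partial map `φ`. -/
def PExt {X : Type*} (ψ φ : PMap X) : Prop :=
  ∀ ⦃x : X⦄ ⦃a : Bool⦄, φ x = some a → ψ x = some a

/-- The set of maximal partial `E`-preserving maps from `(X,E)` into the
two-element chain `2`. -/
def MPE {X : Type*} (E : X → X → Prop) : Set (PMap X) :=
  {φ | EPres E φ ∧ ∀ ψ : PMap X, EPres E ψ → PExt ψ φ → ψ = φ}

/-- A partial morphism from a graph with topology `(X,E,t)` to `2_τ`:
the preimages of `1` and `0` are `t`-closed (equivalently, the domain is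
closed and the restriction to the domain is continuous into discrete `2`),
and the map is `E`-preserving. -/
def PMorphT {X : Type*} (E : X → X → Prop) (t : TopologicalSpace X) (φ : PMap X) : Prop :=
  EPres E φ ∧ @IsClosed X t (pre1 φ) ∧ @IsClosed X t (pre0 φ)

/-- The set of maximal partial morphisms from `(X,E,t)` to `2_τ`. -/
def MPM {X : Type*} (E : X → X → Prop) (t : TopologicalSpace X) : Set (PMap X) :=
  {φ | PMorphT E t φ ∧ ∀ ψ : PMap X, PMorphT E t ψ → PExt ψ φ → ψ = φ}

/-- The relation `E` between partial maps on a lattice `L`: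
`(f,g) ∈ E` iff `f x ≤ g x` for all `x ∈ dom f ∩ dom g`. -/
def ErelP {L : Type*} (f g : PMap L) : Prop :=
  ∀ ⦃x : L⦄ ⦃a b : Bool⦄, f x = some a → g x = some b → a ≤ b

/-- `f ≤₁ g` iff `f⁻¹(1) ⊆ g⁻¹(1)`. -/
def le1 {L : Type*} (f g : PMap L) : Prop := pre1 f ⊆ pre1 g

/-- `f ≤₂ g` iff `f⁻¹(0) ⊆ g⁻¹(0)`. -/
def le2 {L : Type*} (f g : PMap L) : Prop := pre0 f ⊆ pre0 g

section Lat

variable (L : Type*) [Lattice L] [BoundedOrder L]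

/-- A partial homomorphism from a bounded lattice `L` to the two-element
bounded lattice `2_B`: its domain is a `{0,1}`-sublattice of `L` and the
restriction to the domain is a bounded-lattice homomorphism. -/
def PHom (f : PMap L) : Prop :=
  f ⊥ = some false ∧ f ⊤ = some true ∧
  ∀ ⦃a b : L⦄ ⦃x y : Bool⦄, f a = some x → f b = some y →
    f (a ⊓ b) = some (x ⊓ y) ∧ f (a ⊔ b) = some (x ⊔ y)

/-- The set of maximal partial homomorphisms (MPHs) from `L` to `2_B`. -/
def MPHset : Set (PMap L) := {f | PHom L f ∧ ∀ g : PMap L, PHom L g → PExt g f → g = f}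

/-- The underlying set of the graph `D♭(L)`. -/
abbrev MPHsub := {f : PMap L // f ∈ MPHset L}

/-- The relation `E` on `MPH(L, 2_B)`, giving the graph `D♭(L)`. -/
def EM (f g : MPHsub L) : Prop := ErelP f.1 g.1

/-- The evaluation map `e_a` on `MPH(L,2_B)` : `e_a(f) = f(a)` if `a ∈ dom f`. -/
def evalM (a : L) : PMap (MPHsub L) := fun f => f.1 a

/-- `V_a = {f ∈ MPH(L,2_B) : f(a) = 0}`. -/
def VaM (a : L) : Set (MPHsub L) := {f | f.1 a = some false}

/-- `W_a = {f ∈ MPH(L,2_B) : f(a) = 1}`. -/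
def WaM (a : L) : Set (MPHsub L) := {f | f.1 a = some true}

/-- The topology on `MPH(L,2_B)` with the sets `V_a`, `W_a` as a subbasis of
closed sets. -/
def tauM : TopologicalSpace (MPHsub L) :=
  TopologicalSpace.generateFrom {U | ∃ a : L, U = (VaM L a)ᶜ ∨ U = (WaM L a)ᶜ}

/-- A (nonempty) lattice filter. -/
def IsLatFilter (F : Set L) : Prop :=
  F.Nonempty ∧ (∀ ⦃a b : L⦄, a ∈ F → a ≤ b → b ∈ F) ∧
    (∀ ⦃a b : L⦄, a ∈ F → b ∈ F → a ⊓ b ∈ F)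

/-- A (nonempty) lattice ideal. -/
def IsLatIdeal (I : Set L) : Prop :=
  I.Nonempty ∧ (∀ ⦃a b : L⦄, a ∈ I → b ≤ a → b ∈ I) ∧
    (∀ ⦃a b : L⦄, a ∈ I → b ∈ I → a ⊔ b ∈ I)

/-- The set of special partial homomorphisms (SPHs) from `L` to `2_B`:
`f⁻¹(1)` is a nonempty filter, `f⁻¹(0)` is a nonempty ideal, and they are
disjoint. -/
def SPHset : Set (PMap L) :=
  {f | IsLatFilter L (pre1 f) ∧ IsLatIdeal L (pre0 f) ∧ Disjoint (pre1 f) (pre0 f)}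

/-- The underlying set of the graph `D̄♭(L)`. -/
abbrev SPHsub := {f : PMap L // f ∈ SPHset L}

/-- The relation `E` on `SPH(L, 2_B)`, giving the graph `D̄♭(L)`. -/
def ES (f g : SPHsub L) : Prop := ErelP f.1 g.1

/-- The evaluation map `ē_a` on `SPH(L,2_B)`. -/
def evalS (a : L) : PMap (SPHsub L) := fun f => f.1 a

/-- `V_a = {f ∈ SPH(L,2_B) : f(a) = 0}`. -/
def VaS (a : L) : Set (SPHsub L) := {f | f.1 a = some false}

/-- `W_a = {f ∈ SPH(L,2_B) : f(a) = 1}`. -/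
def WaS (a : L) : Set (SPHsub L) := {f | f.1 a = some true}

/-- The topology on `SPH(L,2_B)` with the sets `V_a`, `W_a` as a subbasis of
closed sets. -/
def tauS : TopologicalSpace (SPHsub L) :=
  TopologicalSpace.generateFrom {U | ∃ a : L, U = (VaS L a)ᶜ ∨ U = (WaS L a)ᶜ}

/-- The carrier of the completion built from `D♭(L)`. -/
abbrev CX := {φ : PMap (MPHsub L) // φ ∈ MPE (EM L)}

/-- The carrier of the completion built from `D̄♭(L)`. -/
abbrev CY := {φ : PMap (SPHsub L) // φ ∈ MPE (ES L)}

end Lat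

/-!
On a reflexive graph `(X, E)` a maximal partial `E`-preserving map `φ` is determined by its
fibres, and `(φ⁻¹(1), φ⁻¹(0))` is a formal concept of the non-adjacency relation `Eᶜ`. Hence
`MPE(X,2)` is a concept lattice: meets intersect `1`-fibres and joins intersect `0`-fibres.

For `X = D♭(L)` the `1`-fibre `F` of an MPH `f` is a filter (an MPH equals its saturation), and
`f ∈ ⋀ e(F)`. Every `g ∈ ⋀ e(F)` satisfies `f⁻¹(1) ⊆ g⁻¹(1)`, so each `E`-successor of `g` is one
of `f`. If `f ∈ φ⁻¹(1)`, then `f` has no successor in `φ⁻¹(0)`, hence neither has `g`, and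
`⋀ e(F) ≤ φ`. Joins of ideals are dual. Maximality of `e_a` rests on Zorn's lemma: an MPH `f`
undefined at `a` has an `E`-successor sending `a` to `0` (a maximal extension of the filter
`f⁻¹(1)` and the ideal `↓a`) and, dually, an `E`-predecessor sending `a` to `1`.
-/

section PartialMaps

variable {X : Type*}

lemma PExt.antisymm {φ ψ : PMap X} (h₁ : PExt φ ψ) (h₂ : PExt ψ φ) : φ = ψ := by
  funext x
  match hψ : ψ x, hφ : φ x with
  | some _, _ => rw [← hφ, h₁ hψ]
  | none, some _ => rw [← hψ, h₂ hφ]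
  | none, none => rfl

lemma PExt.update {φ : PMap X} {y : X} (hy : φ y = none) (v : Option Bool) :
    PExt (Function.update φ y v) φ := by
  intro x a hx
  rwa [Function.update_of_ne (by rintro rfl; simp_all)]

lemma pext_of_subset {φ ψ : PMap X} (h₁ : pre1 φ ⊆ pre1 ψ) (h₀ : pre0 φ ⊆ pre0 ψ) :
    PExt ψ φ := by
  rintro x (_ | _) hx
  exacts [h₀ hx, h₁ hx]

lemma disjoint_pre1_pre0 (φ : PMap X) : Disjoint (pre1 φ) (pre0 φ) :=
  Set.disjoint_left.2 fun x h₁ h₀ => by simp_all [pre1, pre0]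

lemma erelP_iff_disjoint {φ ψ : PMap X} : ErelP φ ψ ↔ Disjoint (pre1 φ) (pre0 ψ) := by
  refine ⟨fun h => Set.disjoint_left.2 fun x h₁ h₀ => absurd (h h₁ h₀) (by decide), ?_⟩
  rintro h x (_ | _) (_ | _) hx hy
  all_goals first | decide | exact absurd hy (Set.disjoint_left.1 h hx)

lemma exists_pext_chain_union {c : Set (PMap X)} (hc : IsChain (fun φ ψ => PExt ψ φ) c) :
    ∃ u : PMap X, (∀ φ ∈ c, PExt u φ) ∧ ∀ ⦃x b⦄, u x = some b → ∃ φ ∈ c, φ x = some b := by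
  classical
  let u : PMap X := fun x => if h : ∃ φ ∈ c, φ x ≠ none then h.choose x else none
  refine ⟨u, fun φ hφ x b hx => ?_, fun x b hx => ?_⟩
  · have h : ∃ φ ∈ c, φ x ≠ none := ⟨φ, hφ, by simp [hx]⟩
    obtain ⟨hψ, hψx⟩ := h.choose_spec
    obtain ⟨b', hb'⟩ := Option.ne_none_iff_exists'.1 hψx
    show dite _ _ _ = _
    rw [dif_pos h]
    rcases eq_or_ne φ h.choose with heq | hne
    · rwa [← heq]
    · rcases hc hφ hψ hne with hext | hext
      · exact hext hx
      · rw [hb', ← hx, hext hb']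
  · by_cases h : ∃ φ ∈ c, φ x ≠ none
    · exact ⟨h.choose, h.choose_spec.1, by simpa [u, h] using hx⟩
    · simp [u, h] at hx

noncomputable def PMap.ofFibres (A B : Set X) : PMap X := fun x =>
  if x ∈ A then some true else if x ∈ B then some false else none

lemma PMap.pre1_ofFibres (A B : Set X) : pre1 (PMap.ofFibres A B) = A := by
  ext x; by_cases hA : x ∈ A <;> by_cases hB : x ∈ B <;> simp [PMap.ofFibres, pre1, *]

lemma PMap.pre0_ofFibres {A B : Set X} (h : Disjoint A B) : pre0 (PMap.ofFibres A B) = B := by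
  ext x; by_cases hA : x ∈ A <;> by_cases hB : x ∈ B <;> simp [PMap.ofFibres, pre0, *]
  exact h.notMem_of_mem_left hA hB

lemma PMap.ofFibres_pre1_pre0 (φ : PMap X) : PMap.ofFibres (pre1 φ) (pre0 φ) = φ := by
  funext x; match h : φ x with
  | some true | some false | none => simp [PMap.ofFibres, pre1, pre0, h]

lemma PMap.ofFibres_eq_some_true {A B : Set X} {x : X} :
    PMap.ofFibres A B x = some true ↔ x ∈ A :=
  Set.ext_iff.1 (PMap.pre1_ofFibres A B) x

lemma PMap.ofFibres_eq_some_false {A B : Set X} (h : Disjoint A B) {x : X} :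
    PMap.ofFibres A B x = some false ↔ x ∈ B :=
  Set.ext_iff.1 (PMap.pre0_ofFibres h) x

end PartialMaps

section Graph

variable {X : Type*} {E : X → X → Prop}

lemma EPres.not_edge {φ : PMap X} (hφ : EPres E φ) {x y : X} (hx : φ x = some true)
    (hy : φ y = some false) : ¬ E x y :=
  fun hxy => absurd (hφ hxy hx hy) (by decide)

lemma EPres.update {φ : PMap X} (hφ : EPres E φ) {y : X} {b : Bool}
    (hin : ∀ ⦃x a⦄, E x y → φ x = some a → a ≤ b)
    (hout : ∀ ⦃z c⦄, E y z → φ z = some c → b ≤ c) :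
    EPres E (Function.update φ y (some b)) := by
  intro x z hxz a c hx hz
  rcases eq_or_ne x y with rfl | hxy
  · rw [Function.update_self, Option.some_inj] at hx
    subst hx
    rcases eq_or_ne z x with rfl | hzx
    · rw [Function.update_self, Option.some_inj] at hz
      exact hz.le
    · rw [Function.update_of_ne hzx] at hz
      exact hout hxz hz
  · rw [Function.update_of_ne hxy] at hx
    rcases eq_or_ne z y with rfl | hzy
    · rw [Function.update_self, Option.some_inj] at hz
      exact hz ▸ hin hxz hx
    · rw [Function.update_of_ne hzy] at hz
      exact hφ hxz hx hz

lemma MPE.ne_none_of_epres_update {φ : PMap X} (hφ : φ ∈ MPE E) {y : X} {b : Bool}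
    (hupd : EPres E (Function.update φ y (some b))) : φ y ≠ none := by
  intro hy
  have := congrFun (hφ.2 _ hupd (PExt.update hy _)) y
  simp_all

lemma mem_MPE_of_forall_eq_none {φ : PMap X} (hφ : EPres E φ)
    (h : ∀ x, φ x = none → (∃ y, E x y ∧ φ y = some false) ∧ ∃ z, E z x ∧ φ z = some true) :
    φ ∈ MPE E := by
  refine ⟨hφ, fun ψ hψ hext => funext fun x => ?_⟩
  match hφx : φ x, hψx : ψ x with
  | some a, _ => rw [← hψx, hext hφx]
  | none, none => rfl
  | none, some true =>
    obtain ⟨y, hxy, hy⟩ := (h x hφx).1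
    exact absurd (hψ hxy hψx (hext hy)) (by decide)
  | none, some false =>
    obtain ⟨z, hzx, hz⟩ := (h x hφx).2
    exact absurd (hψ hzx (hext hz) hψx) (by decide)

variable [Std.Refl E]

lemma MPE.pre0_eq_upperPolar {φ : PMap X} (hφ : φ ∈ MPE E) : pre0 φ = upperPolar Eᶜ (pre1 φ) := by
  refine subset_antisymm (fun y hy x hx => hφ.1.not_edge hx hy) fun y hy => ?_
  match hφy : φ y with
  | some false => exact hφy
  | some true => exact absurd (refl y) (hy hφy)
  | none =>
    refine absurd hφy (MPE.ne_none_of_epres_update hφ (b := false) (hφ.1.update ?_ ?_))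
    · rintro x (_ | _) hxy hx
      exacts [le_rfl, absurd hxy (hy hx)]
    · exact fun _ _ _ _ => Bool.false_le _

lemma MPE.pre1_eq_lowerPolar {φ : PMap X} (hφ : φ ∈ MPE E) : pre1 φ = lowerPolar Eᶜ (pre0 φ) := by
  refine subset_antisymm (fun x hx y hy => hφ.1.not_edge hx hy) fun x hx => ?_
  match hφx : φ x with
  | some true => exact hφx
  | some false => exact absurd (refl x) (hx hφx)
  | none =>
    refine absurd hφx (MPE.ne_none_of_epres_update hφ (b := true) (hφ.1.update ?_ ?_))
    · exact fun _ _ _ _ => Bool.le_true _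
    · rintro z (_ | _) hxz hz
      exacts [absurd hxz (hx hz), le_rfl]

lemma MPE.mem_pre1_of_forall_edge {φ : PMap X} (hφ : φ ∈ MPE E) {x x' : X} (hx : x ∈ pre1 φ)
    (h : ∀ z, E x' z → E x z) : x' ∈ pre1 φ := by
  rw [MPE.pre1_eq_lowerPolar hφ]
  exact fun z hz hx'z => hφ.1.not_edge hx hz (h z hx'z)

lemma MPE.mem_pre0_of_forall_edge {φ : PMap X} (hφ : φ ∈ MPE E) {y y' : X} (hy : y ∈ pre0 φ)
    (h : ∀ z, E z y' → E z y) : y' ∈ pre0 φ := by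
  rw [MPE.pre0_eq_upperPolar hφ]
  exact fun z hz hzy' => hφ.1.not_edge hz hy (h z hzy')

lemma disjoint_extent_intent_of_refl (c : Concept X X Eᶜ) : Disjoint c.extent c.intent :=
  Set.disjoint_left.2 fun x hx hx' => c.rel_extent_intent hx hx' (refl x)

lemma ofFibres_mem_MPE (c : Concept X X Eᶜ) :
    PMap.ofFibres c.extent c.intent ∈ MPE E := by
  have hdisj := disjoint_extent_intent_of_refl c
  refine mem_MPE_of_forall_eq_none ?_ fun x hx => ?_
  · rintro x y hxy (_ | _) (_ | _) hx hy
    all_goals first | decide | skip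
    exact absurd hxy (c.rel_extent_intent (PMap.ofFibres_eq_some_true.1 hx)
      ((PMap.ofFibres_eq_some_false hdisj).1 hy))
  have hxA : x ∉ lowerPolar Eᶜ c.intent := by
    rw [c.lowerPolar_intent, ← PMap.ofFibres_eq_some_true (B := c.intent), hx]; simp
  have hxB : x ∉ upperPolar Eᶜ c.extent := by
    rw [c.upperPolar_extent, ← PMap.ofFibres_eq_some_false hdisj, hx]; simp
  simp only [mem_lowerPolar_iff, mem_upperPolar_iff, not_forall] at hxA hxB
  obtain ⟨y, hy, hxy⟩ := hxA
  obtain ⟨z, hz, hzx⟩ := hxB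
  exact ⟨⟨y, not_not.1 hxy, (PMap.ofFibres_eq_some_false hdisj).2 hy⟩,
    z, not_not.1 hzx, PMap.ofFibres_eq_some_true.2 hz⟩

variable (E) in
noncomputable def mpeEquivConcept : {φ : PMap X // φ ∈ MPE E} ≃ Concept X X Eᶜ where
  toFun φ :=
    ⟨pre1 φ.1, pre0 φ.1, (MPE.pre0_eq_upperPolar φ.2).symm, (MPE.pre1_eq_lowerPolar φ.2).symm⟩
  invFun c := ⟨PMap.ofFibres c.extent c.intent, ofFibres_mem_MPE c⟩
  left_inv φ := Subtype.ext (PMap.ofFibres_pre1_pre0 φ.1)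
  right_inv _ := Concept.ext (PMap.pre1_ofFibres _ _)

variable (E) in
/-- Not an instance: `{φ // φ ∈ MPE E}` already carries the pointwise order of `Option Bool`. -/
noncomputable abbrev MPE.completeLattice : CompleteLattice {φ : PMap X // φ ∈ MPE E} :=
  (mpeEquivConcept E).completeLattice

namespace MPE

variable (φ ψ : {φ : PMap X // φ ∈ MPE E})

lemma le_iff_pre1_subset : (MPE.completeLattice E).le φ ψ ↔ pre1 φ.1 ⊆ pre1 ψ.1 := Iff.rfl

lemma le_iff_pre0_subset : (MPE.completeLattice E).le φ ψ ↔ pre0 ψ.1 ⊆ pre0 φ.1 :=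
  Concept.intent_subset_intent_iff.symm

lemma pre1_sInf (S : Set {φ : PMap X // φ ∈ MPE E}) :
    pre1 ((MPE.completeLattice E).sInf S).1 = ⋂ ψ ∈ S, pre1 ψ.1 := by
  change pre1 (PMap.ofFibres (⨅ ψ ∈ S, mpeEquivConcept E ψ).extent _) = _
  simp only [PMap.pre1_ofFibres, Concept.extent_iInf]
  rfl

lemma pre0_sSup (S : Set {φ : PMap X // φ ∈ MPE E}) :
    pre0 ((MPE.completeLattice E).sSup S).1 = ⋂ ψ ∈ S, pre0 ψ.1 := by
  change pre0 (PMap.ofFibres _ (⨆ ψ ∈ S, mpeEquivConcept E ψ).intent) = _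
  rw [PMap.pre0_ofFibres (disjoint_extent_intent_of_refl _)]
  simp only [Concept.intent_iSup]
  rfl

end MPE

end Graph

section Lattice

variable {L : Type*} [Lattice L]

lemma isLatFilter_upperClosure {S : Set L} (hne : S.Nonempty) (hS : InfClosed S) :
    IsLatFilter L (upperClosure S) := by
  refine ⟨hne.mono subset_upperClosure, fun _ _ ha hab => (upperClosure S).upper hab ha, ?_⟩
  rintro a b ⟨s, hs, hsa⟩ ⟨t, ht, htb⟩
  exact ⟨s ⊓ t, hS hs ht, inf_le_inf hsa htb⟩

lemma isLatIdeal_lowerClosure {S : Set L} (hne : S.Nonempty) (hS : SupClosed S) :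
    IsLatIdeal L (lowerClosure S) := by
  refine ⟨hne.mono subset_lowerClosure, fun _ _ ha hba => (lowerClosure S).lower hba ha, ?_⟩
  rintro a b ⟨s, hs, has⟩ ⟨t, ht, hbt⟩
  exact ⟨s ⊔ t, hS hs ht, sup_le_sup has hbt⟩

lemma isLatFilter_Ici (a : L) : IsLatFilter L (Set.Ici a) :=
  ⟨⟨a, le_rfl⟩, fun _ _ h h' => h.trans h', fun _ _ => le_inf⟩

lemma isLatIdeal_Iic (a : L) : IsLatIdeal L (Set.Iic a) :=
  ⟨⟨a, le_rfl⟩, fun _ _ h h' => h'.trans h, fun _ _ => sup_le⟩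

variable [BoundedOrder L]

lemma IsLatFilter.top_mem {F : Set L} (hF : IsLatFilter L F) : ⊤ ∈ F :=
  hF.1.elim fun _ ha => hF.2.1 ha le_top

lemma IsLatIdeal.bot_mem {I : Set L} (hI : IsLatIdeal L I) : ⊥ ∈ I :=
  hI.1.elim fun _ ha => hI.2.1 ha bot_le

lemma phom_ofFibres {F I : Set L} (hF : IsLatFilter L F) (hI : IsLatIdeal L I)
    (h : Disjoint F I) : PHom L (PMap.ofFibres F I) := by
  simp only [PHom, PMap.ofFibres_eq_some_true, PMap.ofFibres_eq_some_false h]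
  refine ⟨hI.bot_mem, hF.top_mem, ?_⟩
  rintro a b (_ | _) (_ | _) ha hb
  all_goals simp only [Bool.false_le, Bool.le_true, inf_of_le_left, inf_of_le_right,
    sup_of_le_left, sup_of_le_right, PMap.ofFibres_eq_some_true,
    PMap.ofFibres_eq_some_false h] at ha hb ⊢
  · exact ⟨hI.2.1 ha inf_le_left, hI.2.2 ha hb⟩
  · exact ⟨hI.2.1 ha inf_le_left, hF.2.1 hb le_sup_right⟩
  · exact ⟨hI.2.1 hb inf_le_right, hF.2.1 ha le_sup_left⟩
  · exact ⟨hF.2.2 ha hb, hF.2.1 ha le_sup_left⟩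

noncomputable def PMap.saturation (f : PMap L) : PMap L :=
  PMap.ofFibres (upperClosure (pre1 f)) (lowerClosure (pre0 f))

namespace PHom

variable {f : PMap L}

lemma infClosed_pre1 (hf : PHom L f) : InfClosed (pre1 f) :=
  fun _ ha _ hb => (hf.2.2 ha hb).1

lemma supClosed_pre0 (hf : PHom L f) : SupClosed (pre0 f) :=
  fun _ ha _ hb => (hf.2.2 ha hb).2

lemma disjoint_upperClosure_lowerClosure (hf : PHom L f) :
    Disjoint (upperClosure (pre1 f) : Set L) (lowerClosure (pre0 f)) := by
  refine Set.disjoint_left.2 fun x ⟨c, hc, hcx⟩ ⟨d, hd, hxd⟩ => ?_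
  have := (hf.2.2 hc hd).2
  rw [sup_eq_right.2 (hcx.trans hxd), hd] at this
  exact absurd this (by decide)

lemma isLatFilter_pre1_saturation (hf : PHom L f) : IsLatFilter L (pre1 f.saturation) := by
  rw [PMap.saturation, PMap.pre1_ofFibres]
  exact isLatFilter_upperClosure ⟨⊤, hf.2.1⟩ hf.infClosed_pre1

lemma isLatIdeal_pre0_saturation (hf : PHom L f) : IsLatIdeal L (pre0 f.saturation) := by
  rw [PMap.saturation, PMap.pre0_ofFibres hf.disjoint_upperClosure_lowerClosure]
  exact isLatIdeal_lowerClosure ⟨⊥, hf.1⟩ hf.supClosed_pre0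

lemma saturation (hf : PHom L f) : PHom L f.saturation :=
  phom_ofFibres (isLatFilter_upperClosure ⟨⊤, hf.2.1⟩ hf.infClosed_pre1)
    (isLatIdeal_lowerClosure ⟨⊥, hf.1⟩ hf.supClosed_pre0) hf.disjoint_upperClosure_lowerClosure

lemma pext_saturation (hf : PHom L f) : PExt f.saturation f := by
  refine pext_of_subset ?_ ?_
  · rw [PMap.saturation, PMap.pre1_ofFibres]
    exact subset_upperClosure
  · rw [PMap.saturation, PMap.pre0_ofFibres hf.disjoint_upperClosure_lowerClosure]
    exact subset_lowerClosure

end PHom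

namespace MPHset

variable {f : PMap L}

lemma saturation_eq (hf : f ∈ MPHset L) : f.saturation = f :=
  hf.2 _ hf.1.saturation hf.1.pext_saturation

lemma isLatFilter_pre1 (hf : f ∈ MPHset L) : IsLatFilter L (pre1 f) :=
  saturation_eq hf ▸ hf.1.isLatFilter_pre1_saturation

lemma isLatIdeal_pre0 (hf : f ∈ MPHset L) : IsLatIdeal L (pre0 f) :=
  saturation_eq hf ▸ hf.1.isLatIdeal_pre0_saturation

end MPHset

lemma PHom.of_chain_union {c : Set (PMap L)} (hc : IsChain (fun φ ψ => PExt ψ φ) c)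
    (hphom : ∀ φ ∈ c, PHom L φ) (hne : c.Nonempty) {u : PMap L} (hu : ∀ φ ∈ c, PExt u φ)
    (hu' : ∀ ⦃x b⦄, u x = some b → ∃ φ ∈ c, φ x = some b) : PHom L u := by
  obtain ⟨φ₀, h₀⟩ := hne
  refine ⟨hu _ h₀ (hphom _ h₀).1, hu _ h₀ (hphom _ h₀).2.1, fun a b x y ha hb => ?_⟩
  obtain ⟨φ, hφ, hφa⟩ := hu' ha
  obtain ⟨ψ, hψ, hψb⟩ := hu' hb
  obtain ⟨χ, hχ, hχa, hχb⟩ : ∃ χ ∈ c, χ a = some x ∧ χ b = some y := by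
    rcases eq_or_ne φ ψ with rfl | hne
    · exact ⟨φ, hφ, hφa, hψb⟩
    · rcases hc hφ hψ hne with h | h
      exacts [⟨ψ, hψ, h hφa, hψb⟩, ⟨φ, hφ, hφa, h hψb⟩]
  exact ((hphom χ hχ).2.2 hχa hχb).imp (fun h => hu χ hχ h) (fun h => hu χ hχ h)

lemma exists_MPHset_pext {f : PMap L} (hf : PHom L f) : ∃ m ∈ MPHset L, PExt m f := by
  let T := {g : PMap L // PHom L g ∧ PExt g f}
  let r : T → T → Prop := fun g h => PExt h.1 g.1
  have : Nonempty T := ⟨⟨f, hf, fun _ _ h => h⟩⟩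
  have hbound : ∀ c, IsChain r c → c.Nonempty → ∃ ub, ∀ g ∈ c, r g ub := by
    intro c hc hne
    have hc' := hc.image_of_map_rel r (fun φ ψ => PExt ψ φ) Subtype.val fun _ _ h => h
    obtain ⟨u, hu, hu'⟩ := exists_pext_chain_union hc'
    have hphom : ∀ φ ∈ Subtype.val '' c, PHom L φ := by
      rintro _ ⟨g, -, rfl⟩
      exact g.2.1
    have huf : PExt u f := hne.elim fun g hg _ _ hx => hu g.1 ⟨g, hg, rfl⟩ (g.2.2 hx)
    exact ⟨⟨u, PHom.of_chain_union hc' hphom (hne.image _) hu hu', huf⟩,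
      fun g hg => hu g.1 ⟨g, hg, rfl⟩⟩
  obtain ⟨m, hm⟩ := exists_maximal_of_nonempty_chains_bounded hbound
    (fun h₁ h₂ _ _ hx => h₂ (h₁ hx))
  refine ⟨m.1, ⟨m.2.1, fun g hg hext => ?_⟩, m.2.2⟩
  exact PExt.antisymm hext (hm ⟨g, hg, fun _ _ hx => hext (m.2.2 hx)⟩ hext)

end Lattice

section DFlat

variable {L : Type*} [Lattice L] [BoundedOrder L]

instance : Std.Refl (EM L) where
  refl f := erelP_iff_disjoint.2 (disjoint_pre1_pre0 f.1)

lemma EM.of_pre1_subset {f g h : MPHsub L} (hfg : pre1 f.1 ⊆ pre1 g.1) (hgh : EM L g h) :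
    EM L f h :=
  erelP_iff_disjoint.2 ((erelP_iff_disjoint.1 hgh).mono_left hfg)

lemma EM.of_pre0_subset {f g h : MPHsub L} (hgh : pre0 g.1 ⊆ pre0 h.1) (hfh : EM L f h) :
    EM L f g :=
  erelP_iff_disjoint.2 ((erelP_iff_disjoint.1 hfh).mono_right hgh)

lemma MPHsub.exists_em_eq_false {f : MPHsub L} {a : L} (ha : f.1 a = none) :
    ∃ g : MPHsub L, EM L f g ∧ g.1 a = some false := by
  have hdisj : Disjoint (pre1 f.1) (Set.Iic a) := Set.disjoint_left.2 fun x hx hxa => by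
    have : f.1 a = some true := (MPHset.isLatFilter_pre1 f.2).2.1 hx hxa
    simp_all
  obtain ⟨g, hg, hext⟩ :=
    exists_MPHset_pext (phom_ofFibres (MPHset.isLatFilter_pre1 f.2) (isLatIdeal_Iic a) hdisj)
  refine ⟨⟨g, hg⟩, EM.of_pre1_subset (g := ⟨g, hg⟩) (fun x hx => ?_) (refl _),
    hext ((PMap.ofFibres_eq_some_false hdisj).2 le_rfl)⟩
  exact hext (PMap.ofFibres_eq_some_true.2 hx)

lemma MPHsub.exists_em_eq_true {f : MPHsub L} {a : L} (ha : f.1 a = none) :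
    ∃ g : MPHsub L, EM L g f ∧ g.1 a = some true := by
  have hdisj : Disjoint (Set.Ici a) (pre0 f.1) := Set.disjoint_right.2 fun x hx hax => by
    have : f.1 a = some false := (MPHset.isLatIdeal_pre0 f.2).2.1 hx hax
    simp_all
  obtain ⟨g, hg, hext⟩ :=
    exists_MPHset_pext (phom_ofFibres (isLatFilter_Ici a) (MPHset.isLatIdeal_pre0 f.2) hdisj)
  refine ⟨⟨g, hg⟩, EM.of_pre0_subset (h := ⟨g, hg⟩) (fun x hx => ?_) (refl _),
    hext (PMap.ofFibres_eq_some_true.2 le_rfl)⟩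
  exact hext ((PMap.ofFibres_eq_some_false hdisj).2 hx)

lemma evalM_mem_MPE (a : L) : evalM L a ∈ MPE (EM L) :=
  mem_MPE_of_forall_eq_none (fun _ _ hfg _ _ hf hg => hfg hf hg) fun _ ha =>
    ⟨MPHsub.exists_em_eq_false ha, MPHsub.exists_em_eq_true ha⟩

variable (L) in
noncomputable def evalMPE (a : L) : CX L := ⟨evalM L a, evalM_mem_MPE a⟩

lemma mem_pre1_sInf_evalMPE {F : Set L} {g : MPHsub L} :
    g ∈ pre1 ((MPE.completeLattice (EM L)).sInf (evalMPE L '' F)).1 ↔ F ⊆ pre1 g.1 := by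
  rw [MPE.pre1_sInf, Set.biInter_image, Set.mem_iInter₂]
  rfl

lemma mem_pre0_sSup_evalMPE {I : Set L} {g : MPHsub L} :
    g ∈ pre0 ((MPE.completeLattice (EM L)).sSup (evalMPE L '' I)).1 ↔ I ⊆ pre0 g.1 := by
  rw [MPE.pre0_sSup, Set.biInter_image, Set.mem_iInter₂]
  rfl

lemma exists_filter_sInf_evalMPE_le {φ : CX L} {f : MPHsub L} (hf : f ∈ pre1 φ.1) :
    ∃ F, IsLatFilter L F ∧
      (MPE.completeLattice (EM L)).le ((MPE.completeLattice (EM L)).sInf (evalMPE L '' F)) φ ∧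
      f ∈ pre1 ((MPE.completeLattice (EM L)).sInf (evalMPE L '' F)).1 := by
  refine ⟨pre1 f.1, MPHset.isLatFilter_pre1 f.2, ?_, mem_pre1_sInf_evalMPE.2 subset_rfl⟩
  exact (MPE.le_iff_pre1_subset _ _).2 fun g hg =>
    MPE.mem_pre1_of_forall_edge φ.2 hf fun _ => EM.of_pre1_subset (mem_pre1_sInf_evalMPE.1 hg)

lemma exists_ideal_le_sSup_evalMPE {φ : CX L} {h : MPHsub L} (hh : h ∈ pre0 φ.1) :
    ∃ I, IsLatIdeal L I ∧
      (MPE.completeLattice (EM L)).le φ ((MPE.completeLattice (EM L)).sSup (evalMPE L '' I)) ∧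
      h ∈ pre0 ((MPE.completeLattice (EM L)).sSup (evalMPE L '' I)).1 := by
  refine ⟨pre0 h.1, MPHset.isLatIdeal_pre0 h.2, ?_, mem_pre0_sSup_evalMPE.2 subset_rfl⟩
  exact (MPE.le_iff_pre0_subset _ _).2 fun g hg =>
    MPE.mem_pre0_of_forall_edge φ.2 hh fun _ => EM.of_pre0_subset (mem_pre0_sSup_evalMPE.1 hg)

end DFlat

/-- **Density.** Let `L` be a bounded lattice, `X = D♭(L)`, and
`e : L → C(X) = MPE(X,2)` the embedding `a ↦ e_a`. Every `φ ∈ C(X)` is the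
join of the meets `⋀ e(F)` (`F` a filter of `L`) lying below it, and the meet
of the joins `⋁ e(I)` (`I` an ideal of `L`) lying above it: the completion
`(e, C(X))` is dense. -/
theorem stmt_7 (L : Type*) [Lattice L] [BoundedOrder L] :
    ∃ inst : CompleteLattice (CX L),
      (∀ φ ψ : CX L, inst.le φ ψ ↔ pre1 φ.1 ⊆ pre1 ψ.1) ∧
      ∃ e : L → CX L,
        (∀ a : L, (e a).1 = evalM L a) ∧
        ∀ φ : CX L,
          φ = inst.sSup {ψ : CX L | ∃ F : Set L, IsLatFilter L F ∧
                ψ = inst.sInf (e '' F) ∧ inst.le ψ φ} ∧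
          φ = inst.sInf {ψ : CX L | ∃ I : Set L, IsLatIdeal L I ∧
                ψ = inst.sSup (e '' I) ∧ inst.le φ ψ} := by
  let inst := MPE.completeLattice (EM L)
  refine ⟨inst, MPE.le_iff_pre1_subset, evalMPE L, fun _ => rfl, fun φ =>
    ⟨le_antisymm ?_ (sSup_le fun _ ⟨_, _, _, h⟩ => h),
      le_antisymm (le_sInf fun _ ⟨_, _, _, h⟩ => h) ?_⟩⟩
  · refine (MPE.le_iff_pre1_subset _ _).2 fun f hf => ?_
    obtain ⟨F, hF, hle, hfF⟩ := exists_filter_sInf_evalMPE_le hf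
    exact (MPE.le_iff_pre1_subset _ _).1 (le_sSup (by exact ⟨F, hF, rfl, hle⟩)) hfF
  · refine (MPE.le_iff_pre0_subset _ _).2 fun h hh => ?_
    obtain ⟨I, hI, hle, hhI⟩ := exists_ideal_le_sSup_evalMPE hh
    exact (MPE.le_iff_pre0_subset _ _).1 (sInf_le (by exact ⟨I, hI, rfl, hle⟩)) hhI

end CanExt
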